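/- The function g(w) = (1/2)((1/2)‖w‖² − ν)² + (1/2)wᵀDw − ψᵀw has at most one local minimizer that is not a global minimizer. -/

import Mathlib

/-!
Put `σ = ½‖w‖² - ν` and `a = α + σ`. Around a stationary point `w` (that is, `a i * w i = ψ i`
for all `i`) the objective is exactly
`g (w + v) = g w + ½ ∑ a i v i² + ½ (⟪w, v⟫ + ½‖v‖²)²`, so `w` is a global minimizer as soon as
`a ≥ 0`. At a local non-global minimizer some `a i₀` is therefore negative, and the second-order
condition `diag a + w wᵀ ⪰ 0`, tested on a few explicit directions, forces `i₀` to be the only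
negative index, `w i₀ ≠ 0`, and `∑ w i² / a i ≤ -1`.

Writing `w i = ψ i / (α i + σ)`, the multiplier of such a point is a root of
`φ σ = 2 (σ + ν)` with `φ σ = ∑ ψ i² / (α i + σ)²`, and `∑ w i² / a i ≤ -1` says `φ' σ ≥ 2`.
All such roots lie in the interval where exactly `α i₀ + σ` is negative, on which `φ` is strictly
convex; a strictly convex function meets a line at most twice, and at the smaller intersection its
slope is less than that of the line. Hence two such points have the same multiplier, and then
they coincide.
-/

open Finset Filter Topology

theorem IsLocalMin.nonneg_of_eq_add_pow_mul {φ G : ℝ → ℝ} (hmin : IsLocalMin φ 0) (k : ℕ)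
    (hφ : ∀ t, φ t = φ 0 + t ^ k * G t) (hG : ContinuousAt G 0) : 0 ≤ G 0 := by
  by_contra! hG0
  have hneg : ∀ᶠ t in 𝓝 (0 : ℝ), G t < 0 := hG.eventually (gt_mem_nhds hG0)
  have h : ∀ᶠ t in 𝓝[>] (0 : ℝ), 0 < t ∧ G t < 0 ∧ φ 0 ≤ φ t :=
    eventually_mem_nhdsWithin.and ((hneg.and hmin).filter_mono nhdsWithin_le_nhds)
  obtain ⟨t, ht, hGt, hle⟩ := h.exists
  have : t ^ k * G t < 0 := mul_neg_of_pos_of_neg (pow_pos ht k) hGt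
  linarith [hφ t]

theorem IsLocalMin.nonneg_of_line_eq {E : Type*} [TopologicalSpace E] [AddCommGroup E]
    [Module ℝ E] [ContinuousAdd E] [ContinuousSMul ℝ E] {f : E → ℝ} {w : E}
    (hmin : IsLocalMin f w) (d : E) {G : ℝ → ℝ} (k : ℕ)
    (hf : ∀ t : ℝ, f (w + t • d) = f w + t ^ k * G t) (hG : ContinuousAt G 0) : 0 ≤ G 0 := by
  have hline : IsLocalMin (fun t : ℝ => f (w + t • d)) 0 :=
    IsLocalMin.comp_continuous (by simpa using hmin) (by fun_prop)
  exact hline.nonneg_of_eq_add_pow_mul k (by simpa using hf) hG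

theorem mul_div_sq_eq (a x : ℝ) : a * (x / a) ^ 2 = x ^ 2 / a := by
  rcases eq_or_ne a 0 with rfl | ha
  · simp
  · field_simp

theorem sq_div_sq_sub_lt {ψ a δ : ℝ} (hψ : ψ ≠ 0) (hsign : 0 < a * (a + δ)) (hδ : δ ≠ 0) :
    ψ ^ 2 / a ^ 2 - 2 * δ * (ψ ^ 2 / a ^ 3) < ψ ^ 2 / (a + δ) ^ 2 := by
  have ha : a ≠ 0 := by rintro rfl; simp at hsign
  have haδ : a + δ ≠ 0 := by intro h; simp [h] at hsign
  -- the tangent-line defect of the convex function `a ↦ ψ² / a²` on a half-line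
  have hdefect : ψ ^ 2 / (a + δ) ^ 2 - (ψ ^ 2 / a ^ 2 - 2 * δ * (ψ ^ 2 / a ^ 3))
      = ψ ^ 2 * δ ^ 2 * (a ^ 2 + 2 * (a * (a + δ))) / (a ^ 4 * (a + δ) ^ 2) := by
    field_simp; ring
  rw [← sub_pos, hdefect]
  positivity

section

variable {ι : Type*} [Fintype ι]

theorem sum_sq_div_sq_sub_lt (ψ a : ι → ℝ) {δ : ℝ} (hδ : δ ≠ 0) {i₀ : ι} (hψ : ψ i₀ ≠ 0)
    (hsign : ∀ i, ψ i ≠ 0 → 0 < a i * (a i + δ)) :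
    ∑ i, ψ i ^ 2 / a i ^ 2 - 2 * δ * ∑ i, ψ i ^ 2 / a i ^ 3 < ∑ i, ψ i ^ 2 / (a i + δ) ^ 2 := by
  rw [mul_sum, ← sum_sub_distrib]
  refine sum_lt_sum (fun i _ => ?_) ⟨i₀, mem_univ _, sq_div_sq_sub_lt hψ (hsign i₀ hψ) hδ⟩
  rcases eq_or_ne (ψ i) 0 with h | h
  · simp [h]
  · exact (sq_div_sq_sub_lt h (hsign i h) hδ).le

/-- The Hessian of the objective at a stationary point `w`, with `a = α + σ`, is `diag a + w wᵀ`. -/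
def HessianNonneg (a w : ι → ℝ) : Prop :=
  ∀ d : ι → ℝ, 0 ≤ ∑ i, a i * d i ^ 2 + (∑ i, w i * d i) ^ 2

namespace HessianNonneg

variable {a w : ι → ℝ}

theorem add_sq_nonneg (hH : HessianNonneg a w) (i : ι) : 0 ≤ a i + w i ^ 2 := by
  classical
  simpa [Pi.single_apply] using hH (Pi.single i 1)

theorem mul_sq_le (hH : HessianNonneg a w) {i j : ι} (hij : i ≠ j) :
    -a i * w j ^ 2 ≤ a j * w i ^ 2 := by
  classical
  have h := hH fun k => if k = i then w j else if k = j then -w i else 0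
  have hsum (f : ι → ℝ → ℝ) (hf : ∀ k, f k 0 = 0) :
      ∑ k, f k (if k = i then w j else if k = j then -w i else 0) = f i (w j) + f j (-w i) := by
    rw [Fintype.sum_eq_add i j hij fun k hk => by simp [hk.1, hk.2, hf]]
    simp [hij.symm]
  rw [hsum (fun k x => a k * x ^ 2) (by simp), hsum (fun k x => w k * x) (by simp)] at h
  nlinarith

theorem sum_sq_div_le_neg_one (hH : HessianNonneg a w) {i₀ : ι} (ha : a i₀ < 0) :
    ∑ i, w i ^ 2 / a i ≤ -1 := by
  classical
  set s := ∑ i, w i ^ 2 / a i with hs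
  set W := w i₀
  have ha₀ : a i₀ ≠ 0 := ha.ne
  set d : ι → ℝ := fun i => W * (w i / a i) - (1 + s) * if i = i₀ then 1 else 0
  have hquad (i : ι) : a i * d i ^ 2
      = W ^ 2 * (w i ^ 2 / a i)
        + if i = i₀ then (1 + s) ^ 2 * a i₀ - 2 * W ^ 2 * (1 + s) else 0 := by
    split_ifs with hi
    · subst hi; simp only [d, if_true]; field_simp; ring
    · simp only [d, hi, if_false, mul_zero, sub_zero, mul_pow, ← mul_div_sq_eq, add_zero]; ring
  have hlin (i : ι) : w i * d i = W * (w i ^ 2 / a i) - if i = i₀ then (1 + s) * W else 0 := by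
    split_ifs with hi
    · subst hi; simp only [d, if_true]; field_simp; ring
    · simp only [d, hi, if_false]; ring
  have h := hH d
  simp only [hquad, hlin, sum_add_distrib, sum_sub_distrib, ← mul_sum, sum_ite_eq', mem_univ,
    if_true, ← hs] at h
  have hval : W ^ 2 * s + ((1 + s) ^ 2 * a i₀ - 2 * W ^ 2 * (1 + s)) + (W * s - (1 + s) * W) ^ 2
      = (1 + s) * ((1 + s) * a i₀ - W ^ 2) := by ring
  rw [hval] at h
  by_contra! hgt
  have : (1 + s) * a i₀ - W ^ 2 < 0 := by nlinarith [sq_nonneg W]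
  linarith [mul_neg_of_pos_of_neg (by linarith : 0 < 1 + s) this]

end HessianNonneg

noncomputable def quarticObjective (α ψ : ι → ℝ) (ν : ℝ) (w : ι → ℝ) : ℝ :=
  (1/2) * ((1/2) * ∑ i, w i ^ 2 - ν) ^ 2 + (1/2) * ∑ i, α i * w i ^ 2 - ∑ i, ψ i * w i

noncomputable def penaltyMultiplier (ν : ℝ) (w : ι → ℝ) : ℝ := (1/2) * ∑ i, w i ^ 2 - ν

theorem sum_sq_eq_penaltyMultiplier (ν : ℝ) (w : ι → ℝ) :
    ∑ i, w i ^ 2 = 2 * (penaltyMultiplier ν w + ν) := by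
  unfold penaltyMultiplier; ring

section Expansion

variable (α ψ : ι → ℝ) (ν : ℝ)

theorem quarticObjective_add (w v : ι → ℝ) :
    quarticObjective α ψ ν (w + v) = quarticObjective α ψ ν w
      + ∑ i, ((α i + penaltyMultiplier ν w) * w i - ψ i) * v i
      + (1/2) * ∑ i, (α i + penaltyMultiplier ν w) * v i ^ 2
      + (1/2) * (∑ i, w i * v i + (1/2) * ∑ i, v i ^ 2) ^ 2 := by
  have hsq : ∑ i, (w i + v i) ^ 2 = ∑ i, w i ^ 2 + 2 * ∑ i, w i * v i + ∑ i, v i ^ 2 := by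
    simp only [mul_sum, ← sum_add_distrib]; exact sum_congr rfl fun i _ => by ring
  have hα : ∑ i, α i * (w i + v i) ^ 2
      = ∑ i, α i * w i ^ 2 + 2 * ∑ i, α i * w i * v i + ∑ i, α i * v i ^ 2 := by
    simp only [mul_sum, ← sum_add_distrib]; exact sum_congr rfl fun i _ => by ring
  have hlin : ∑ i, ((α i + penaltyMultiplier ν w) * w i - ψ i) * v i
      = ∑ i, α i * w i * v i + penaltyMultiplier ν w * ∑ i, w i * v i - ∑ i, ψ i * v i := by
    simp only [mul_sum, ← sum_add_distrib, ← sum_sub_distrib]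
    exact sum_congr rfl fun i _ => by ring
  rw [hlin]
  simp only [quarticObjective, Pi.add_apply, hsq, hα, mul_add, add_mul, sum_add_distrib, ← mul_sum]
  unfold penaltyMultiplier
  ring

theorem quarticObjective_add_smul (w d : ι → ℝ) (t : ℝ) :
    quarticObjective α ψ ν (w + t • d) = quarticObjective α ψ ν w
      + t * ∑ i, ((α i + penaltyMultiplier ν w) * w i - ψ i) * d i
      + t ^ 2 * ((1/2) * ∑ i, (α i + penaltyMultiplier ν w) * d i ^ 2
        + (1/2) * (∑ i, w i * d i + t * ((1/2) * ∑ i, d i ^ 2)) ^ 2) := by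
  have h1 (f : ι → ℝ) : ∑ i, f i * (t * d i) = t * ∑ i, f i * d i := by
    rw [mul_sum]; exact sum_congr rfl fun _ _ => by ring
  have h2 (f : ι → ℝ) : ∑ i, f i * (t * d i) ^ 2 = t ^ 2 * ∑ i, f i * d i ^ 2 := by
    rw [mul_sum]; exact sum_congr rfl fun _ _ => by ring
  rw [quarticObjective_add]
  simp only [Pi.smul_apply, smul_eq_mul, h1, h2]
  simp only [mul_pow, ← mul_sum]
  ring

end Expansion

variable {α ψ : ι → ℝ} {ν : ℝ} {w : ι → ℝ}

theorem IsLocalMin.quarticObjective_stationary (hmin : IsLocalMin (quarticObjective α ψ ν) w)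
    (i : ι) : (α i + penaltyMultiplier ν w) * w i = ψ i := by
  classical
  have hdir (d : ι → ℝ) : 0 ≤ ∑ i, ((α i + penaltyMultiplier ν w) * w i - ψ i) * d i := by
    have h := hmin.nonneg_of_line_eq d 1
      (G := fun t => ∑ i, ((α i + penaltyMultiplier ν w) * w i - ψ i) * d i
        + t * ((1/2) * ∑ i, (α i + penaltyMultiplier ν w) * d i ^ 2
          + (1/2) * (∑ i, w i * d i + t * ((1/2) * ∑ i, d i ^ 2)) ^ 2))
      (fun t => by rw [quarticObjective_add_smul]; ring) (by fun_prop)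
    simpa using h
  have hup := hdir (Pi.single i 1)
  have hdown := hdir (-Pi.single i 1)
  simp only [Pi.single_apply, mul_ite, mul_one, mul_zero, sum_ite_eq', mem_univ, ↓reduceIte,
    sub_nonneg, Pi.neg_apply, mul_neg, sum_neg_distrib, neg_sub] at hup hdown
  linarith

theorem IsLocalMin.quarticObjective_hessianNonneg
    (hmin : IsLocalMin (quarticObjective α ψ ν) w) :
    HessianNonneg (fun i => α i + penaltyMultiplier ν w) w := by
  intro d
  have h := hmin.nonneg_of_line_eq d 2
    (G := fun t => (1/2) * ∑ i, (α i + penaltyMultiplier ν w) * d i ^ 2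
        + (1/2) * (∑ i, w i * d i + t * ((1/2) * ∑ i, d i ^ 2)) ^ 2)
    (fun t => by
      rw [quarticObjective_add_smul]
      simp only [hmin.quarticObjective_stationary, sub_self, zero_mul, sum_const_zero, mul_zero,
        add_zero])
    (by fun_prop)
  simp only [zero_mul, add_zero] at h
  linarith

theorem quarticObjective_le_of_stationary
    (hst : ∀ i, (α i + penaltyMultiplier ν w) * w i = ψ i)
    (hpos : ∀ i, 0 ≤ α i + penaltyMultiplier ν w) (v : ι → ℝ) :
    quarticObjective α ψ ν w ≤ quarticObjective α ψ ν v := by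
  have h := quarticObjective_add α ψ ν w (v - w)
  simp only [add_sub_cancel, hst, sub_self, zero_mul, sum_const_zero, add_zero] at h
  rw [h]
  have := sum_nonneg fun i (_ : i ∈ univ) => mul_nonneg (hpos i) (sq_nonneg ((v - w) i))
  nlinarith [sq_nonneg (∑ i, w i * (v - w) i + (1/2) * ∑ i, (v - w) i ^ 2)]

theorem IsLocalMin.exists_neg_of_not_isGlobalMin (hmin : IsLocalMin (quarticObjective α ψ ν) w)
    (hng : ¬ ∀ v, quarticObjective α ψ ν w ≤ quarticObjective α ψ ν v) :
    ∃ i₀, α i₀ + penaltyMultiplier ν w < 0 ∧ ψ i₀ ≠ 0 ∧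
      (∀ j ≠ i₀, 0 ≤ α j + penaltyMultiplier ν w) ∧
      (∀ i, w i = ψ i / (α i + penaltyMultiplier ν w)) ∧
      ∑ i, w i ^ 2 / (α i + penaltyMultiplier ν w) ≤ -1 := by
  have hst := hmin.quarticObjective_stationary
  have hH := hmin.quarticObjective_hessianNonneg
  obtain ⟨i₀, ha⟩ : ∃ i₀, α i₀ + penaltyMultiplier ν w < 0 := by
    by_contra! hpos
    exact hng (quarticObjective_le_of_stationary hst hpos)
  have hW : w i₀ ≠ 0 := by
    intro h0
    linarith [h0 ▸ hH.add_sq_nonneg i₀]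
  have hW2 : 0 < w i₀ ^ 2 := by positivity
  have hcross (j : ι) (hj : j ≠ i₀) := hH.mul_sq_le hj.symm
  have hpos (j : ι) (hj : j ≠ i₀) : 0 ≤ α j + penaltyMultiplier ν w := by
    nlinarith [hcross j hj, sq_nonneg (w j)]
  refine ⟨i₀, ha, ?_, hpos, fun i => ?_, hH.sum_sq_div_le_neg_one ha⟩
  · rw [← hst i₀]
    exact mul_ne_zero ha.ne hW
  · rcases eq_or_ne (α i + penaltyMultiplier ν w) 0 with h0 | h0
    · have hi : i ≠ i₀ := by rintro rfl; linarith
      have : w i ^ 2 = 0 := by nlinarith [hcross i hi, sq_nonneg (w i)]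
      rw [← hst i, h0]
      simpa using this
    · rw [← hst i, mul_div_cancel_left₀ _ h0]

theorem eq_of_penaltyMultiplier_le {w' : ι → ℝ}
    (h : IsLocalMin (quarticObjective α ψ ν) w)
    (h' : ¬ ∀ v, quarticObjective α ψ ν w ≤ quarticObjective α ψ ν v)
    (h₂ : IsLocalMin (quarticObjective α ψ ν) w')
    (h₂' : ¬ ∀ v, quarticObjective α ψ ν w' ≤ quarticObjective α ψ ν v)
    (hle : penaltyMultiplier ν w ≤ penaltyMultiplier ν w') : w = w' := by
  obtain ⟨i₀, ha, hψ, hpos, hw, hs⟩ := h.exists_neg_of_not_isGlobalMin h'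
  obtain ⟨j₀, ha', -, -, hw', -⟩ := h₂.exists_neg_of_not_isGlobalMin h₂'
  have hst := h.quarticObjective_stationary
  set σ := penaltyMultiplier ν w
  set σ' := penaltyMultiplier ν w'
  rcases hle.eq_or_lt with heq | hlt
  · funext i
    rw [hw, hw', heq]
  exfalso
  have hj₀ : j₀ = i₀ := by
    by_contra hne
    linarith [hpos j₀ hne]
  subst hj₀
  have hsign (i : ι) (hi : ψ i ≠ 0) : 0 < (α i + σ) * (α i + σ + (σ' - σ)) := by
    by_cases hi₀ : i = j₀
    · subst hi₀; nlinarith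
    · have hne : α i + σ ≠ 0 := by
        intro h0; apply hi; rw [← hst i, h0, zero_mul]
      have := lt_of_le_of_ne (hpos i hi₀) hne.symm
      exact mul_pos this (by linarith)
  have hlt' := sum_sq_div_sq_sub_lt ψ (fun i => α i + σ) (by linarith) hψ hsign
  have e₁ : ∑ i, ψ i ^ 2 / (α i + σ) ^ 2 = 2 * (σ + ν) := by
    rw [← sum_sq_eq_penaltyMultiplier]
    exact sum_congr rfl fun i _ => by rw [hw i, div_pow]
  have e₂ : ∑ i, ψ i ^ 2 / (α i + σ) ^ 3 = ∑ i, w i ^ 2 / (α i + σ) :=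
    sum_congr rfl fun i _ => by rw [hw i, div_pow, div_div, ← pow_succ]
  have e₃ : ∑ i, ψ i ^ 2 / (α i + σ + (σ' - σ)) ^ 2 = 2 * (σ' + ν) := by
    rw [← sum_sq_eq_penaltyMultiplier]
    exact sum_congr rfl fun i _ => by rw [hw' i, div_pow, add_assoc, add_sub_cancel]
  rw [e₁, e₂, e₃] at hlt'
  linarith [mul_le_mul_of_nonneg_left hs (sub_nonneg.2 hle)]

end

theorem stmt4_general {n : ℕ} (α ψ : Fin n → ℝ) (ν : ℝ)
    (g : (Fin n → ℝ) → ℝ)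
    (hg : ∀ w, g w = (1/2) * ((1/2) * ∑ i, (w i)^2 - ν)^2
        + (1/2) * ∑ i, α i * (w i)^2 - ∑ i, ψ i * w i)
    (w₁ w₂ : Fin n → ℝ)
    (h₁ : IsLocalMin g w₁) (h₁' : ¬ ∀ v, g w₁ ≤ g v)
    (h₂ : IsLocalMin g w₂) (h₂' : ¬ ∀ v, g w₂ ≤ g v) :
    w₁ = w₂ := by
  obtain rfl : g = quarticObjective α ψ ν := funext hg
  rcases le_total (penaltyMultiplier ν w₁) (penaltyMultiplier ν w₂) with hle | hle
  · exact eq_of_penaltyMultiplier_le h₁ h₁' h₂ h₂' hle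
  · exact (eq_of_penaltyMultiplier_le h₂ h₂' h₁ h₁' hle).symm

theorem stmt4 {n : ℕ} (hn : 1 ≤ n) (α ψ : Fin n → ℝ) (hα : Monotone α) (ν : ℝ)
    (g : (Fin n → ℝ) → ℝ)
    (hg : ∀ w, g w = (1/2) * ((1/2) * ∑ i, (w i)^2 - ν)^2
        + (1/2) * ∑ i, α i * (w i)^2 - ∑ i, ψ i * w i)
    (w₁ w₂ : Fin n → ℝ)
    (h₁ : IsLocalMin g w₁) (h₁' : ¬ ∀ v, g w₁ ≤ g v)
    (h₂ : IsLocalMin g w₂) (h₂' : ¬ ∀ v, g w₂ ≤ g v) :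
    w₁ = w₂ :=
  stmt4_general α ψ ν g hg w₁ w₂ h₁ h₁' h₂ h₂'
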